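/- arXiv:0906.2629 — 4 statements merged into one kernel-verified Lean document; each statement's English description precedes it below -/
import Mathlib

section
/- Let p > 2 be a prime and f(x) = x⁴ + a x² + b x + c ∈ ℤ[x]. Then f(x) modulo p is the square of an irreducible quadratic polynomial in 𝔽_p[x] if and only if p ∣ b, p ∤ ac, a² ≡ 4c (mod p), and −a/2 is a quadratic nonresidue modulo p. -/
/-!
Normalising the leading coefficient, a square root of the monic quartic may be taken monic,
`X² + sX + t`. Comparing coefficients with `X⁴ + aX² + bX + c` forces `s = 0`, `b = 0`,
`a = 2t` and `c = t²` (this is where `2 ≠ 0` is needed), and `X² + t` is irreducible exactly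
when `-t = -a/2` is not a square.
-/

open Polynomial

theorem Polynomial.Monic.eq_X_sq_add_C_mul_X_add_C {R : Type*} [CommRing R] {g : R[X]}
    (hg : g.Monic) (h2 : g.natDegree = 2) :
    g = X ^ 2 + C (g.coeff 1) * X + C (g.coeff 0) := by
  conv_lhs => rw [hg.as_sum, h2]
  simp only [Finset.sum_range_succ, Finset.sum_range_zero, zero_add, pow_zero, pow_one, mul_one]
  ring

theorem exists_monic_associated_sq_eq {R : Type*} [CommRing R] [IsDomain R] {f g : R[X]}
    (hf : f.Monic) (hfg : f = g ^ 2) : ∃ m : R[X], m.Monic ∧ Associated g m ∧ f = m ^ 2 := by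
  set l := g.leadingCoeff
  have hl : l * l = 1 := by rw [← sq, ← leadingCoeff_pow, ← hfg, hf.leadingCoeff]
  refine ⟨C l * g, ?_, ?_, ?_⟩
  · rw [Monic, leadingCoeff_mul, leadingCoeff_C, hl]
  · exact (associated_unit_mul_left g (C l) (isUnit_C.mpr (IsUnit.of_mul_eq_one l hl))).symm
  · rw [hfg, mul_pow, ← C_pow, sq l, hl, C_1, one_mul]

theorem irreducible_X_sq_add_C_iff {K : Type*} [Field K] {t : K} :
    Irreducible (X ^ 2 + C t) ↔ ¬∃ u : K, u ^ 2 = -t := by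
  rw [← sub_neg_eq_add, ← C_neg, X_pow_sub_C_irreducible_iff_of_prime Nat.prime_two]
  simp only [ne_eq, not_exists]

theorem quartic_eq_sq_monic_quadratic_iff {R : Type*} [CommRing R] [IsDomain R]
    (h2 : (2 : R) ≠ 0) {A B D s t : R} :
    X ^ 4 + C A * X ^ 2 + C B * X + C D = (X ^ 2 + C s * X + C t) ^ 2 ↔
      s = 0 ∧ B = 0 ∧ A = 2 * t ∧ D = t ^ 2 := by
  have expand : (X ^ 2 + C s * X + C t) ^ 2 =
      X ^ 4 + C (2 * s) * X ^ 3 + C (s ^ 2 + 2 * t) * X ^ 2 + C (2 * s * t) * X + C (t ^ 2) := by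
    simp only [C_mul, C_add, C_pow, map_ofNat]
    ring
  rw [expand]
  constructor
  · intro h
    have e3 := congrArg (coeff · 3) h
    have e2 := congrArg (coeff · 2) h
    have e1 := congrArg (coeff · 1) h
    have e0 := congrArg (coeff · 0) h
    simp only [coeff_add, coeff_C_mul, coeff_X_pow, coeff_X, coeff_C] at e3 e2 e1 e0
    norm_num at e3 e2 e1 e0
    obtain rfl : s = 0 := e3.resolve_left h2
    exact ⟨rfl, by simpa using e1, by simpa using e2, e0⟩
  · rintro ⟨rfl, rfl, rfl, rfl⟩
    simp

theorem exists_irreducible_sq_eq_quartic_iff {K : Type*} [Field K] (h2 : (2 : K) ≠ 0)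
    (A B D : K) :
    (∃ g : K[X], Irreducible g ∧ g.natDegree = 2 ∧
      X ^ 4 + C A * X ^ 2 + C B * X + C D = g ^ 2) ↔
      B = 0 ∧ A * D ≠ 0 ∧ A ^ 2 = 4 * D ∧ ¬∃ u : K, 2 * u ^ 2 = -A := by
  constructor
  · rintro ⟨g, hirr, hdeg, hsq⟩
    obtain ⟨m, hm, hgm, hfm⟩ := exists_monic_associated_sq_eq (by monicity!) hsq
    have hmdeg : m.natDegree = 2 :=
      hdeg ▸ natDegree_eq_of_degree_eq (degree_eq_degree_of_associated hgm).symm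
    obtain ⟨s, t, rfl⟩ : ∃ s t : K, m = X ^ 2 + C s * X + C t :=
      ⟨_, _, hm.eq_X_sq_add_C_mul_X_add_C hmdeg⟩
    obtain ⟨rfl, rfl, rfl, rfl⟩ := (quartic_eq_sq_monic_quadratic_iff h2).mp hfm
    have hnr : ¬∃ u : K, u ^ 2 = -t := by
      rw [← irreducible_X_sq_add_C_iff]
      simpa using hgm.irreducible hirr
    have ht : t ≠ 0 := fun ht => hnr ⟨0, by simp [ht]⟩
    refine ⟨rfl, mul_ne_zero (mul_ne_zero h2 ht) (pow_ne_zero 2 ht), by ring, ?_⟩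
    rintro ⟨u, hu⟩
    exact hnr ⟨u, mul_left_cancel₀ h2 (by linear_combination hu)⟩
  · rintro ⟨rfl, -, hsq, hnr⟩
    refine ⟨X ^ 2 + C (A / 2), ?_, natDegree_X_pow_add_C, ?_⟩
    · rw [irreducible_X_sq_add_C_iff]
      rintro ⟨u, hu⟩
      exact hnr ⟨u, by rw [hu, mul_neg, mul_div_cancel₀ A h2]⟩
    · have hD : D = (A / 2) ^ 2 := by
        rw [div_pow, eq_div_iff (pow_ne_zero 2 h2)]
        linear_combination -hsq
      simpa using (quartic_eq_sq_monic_quadratic_iff h2 (s := 0)).mpr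
        ⟨rfl, rfl, (mul_div_cancel₀ A h2).symm, hD⟩

/-- for an odd prime p, f = x⁴ + ax² + bx + c reduces mod p to the square
of an irreducible quadratic iff p ∣ b, p ∤ ac, a² ≡ 4c (mod p), and −a/2 is a quadratic
nonresidue mod p (no u with 2u² = −a in 𝔽_p). -/
theorem stmt3 (p : ℕ) (hp : p.Prime) (hp2 : 2 < p) (a b c : ℤ) (f : Polynomial ℤ)
    (hf : f = X ^ 4 + C a * X ^ 2 + C b * X + C c) :
    (∃ g : Polynomial (ZMod p), Irreducible g ∧ g.natDegree = 2 ∧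
      f.map (Int.castRingHom (ZMod p)) = g ^ 2) ↔
    ((p : ℤ) ∣ b ∧ ¬ (p : ℤ) ∣ (a * c) ∧ (a : ZMod p) ^ 2 = 4 * (c : ZMod p) ∧
      ¬ ∃ u : ZMod p, 2 * u ^ 2 = -(a : ZMod p)) := by
  have : Fact p.Prime := ⟨hp⟩
  have h2 : (2 : ZMod p) ≠ 0 := Ring.two_ne_zero (by rw [ZMod.ringChar_zmod_n]; omega)
  have hmap : f.map (Int.castRingHom (ZMod p)) =
      X ^ 4 + C (a : ZMod p) * X ^ 2 + C (b : ZMod p) * X + C (c : ZMod p) := by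
    simp [hf]
  rw [hmap, exists_irreducible_sq_eq_quartic_iff h2, ← ZMod.intCast_zmod_eq_zero_iff_dvd,
    ← ZMod.intCast_zmod_eq_zero_iff_dvd, Int.cast_mul]
end

section
/- With the notation above (f monic, f ≡ ∏ φ_i^{ℓ_i} mod p, q_{i,j} the quotient of f by φ_i^j), the n = ∑_i ℓ_i·deg φ_i polynomials q_{i,j}(x)·x^k for 1 ≤ i ≤ t, 1 ≤ j ≤ ℓ_i, 0 ≤ k < deg φ_i, are linearly independent modulo p, i.e., their reductions in 𝔽_p[x] are 𝔽_p-linearly independent. -/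
open Polynomial

/-- φ-adic digit uniqueness. -/
lemma digit_lemma {K : Type*} [Field K] {φ : K[X]} (hφ : φ.Monic) :
    ∀ (L : ℕ) (P : ℕ → K[X]), (∀ j, (P j).degree < φ.degree) →
      ∑ j ∈ Finset.range L, φ ^ (L - (j + 1)) * P j = 0 → ∀ j < L, P j = 0 := by
  intro L
  induction L with
  | zero => intro P _ _ j hj; omega
  | succ L ih =>
    intro P hdeg hsum j hj
    rw [Finset.sum_range_succ] at hsum
    have hφ0 : φ ≠ 0 := hφ.ne_zero
    have hPL : P L = 0 := by
      have hdvd : φ ∣ P L := by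
        have heq : P L = -∑ j ∈ Finset.range L, φ ^ (L + 1 - (j + 1)) * P j := by
          rw [Nat.sub_self, pow_zero, one_mul] at hsum
          linear_combination hsum
        rw [heq]
        refine dvd_neg.2 (Finset.dvd_sum fun i hi => ?_)
        have : L + 1 - (i + 1) = (L - (i + 1)) + 1 := by
          simp at hi; omega
        rw [this, pow_succ]
        exact Dvd.dvd.mul_right (Dvd.dvd.mul_left (dvd_refl φ) _) _
      by_contra h
      exact absurd (Polynomial.degree_le_of_dvd hdvd h) (not_le.2 (hdeg L))
    rw [hPL, mul_zero, add_zero] at hsum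
    have hsum2 : φ * ∑ j ∈ Finset.range L, φ ^ (L - (j + 1)) * P j = 0 := by
      rw [Finset.mul_sum]
      rw [← hsum]
      refine Finset.sum_congr rfl fun i hi => ?_
      simp at hi
      have : L + 1 - (i + 1) = (L - (i + 1)) + 1 := by omega
      rw [this, pow_succ]; ring
    have := mul_eq_zero.1 hsum2
    rcases this with h | h
    · exact absurd h hφ0
    · rcases Nat.lt_succ_iff_lt_or_eq.1 hj with hj' | rfl
      · exact ih P hdeg h j hj'
      · exact hPL

/-- the reductions modulo p of the polynomials q_{i,j}(x)·x^k,
for 1 ≤ i ≤ t, 1 ≤ j ≤ ℓᵢ, 0 ≤ k < deg φᵢ, are linearly independent over 𝔽_p. -/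
theorem stmt13 (p : ℕ) (hp : p.Prime) (t : ℕ) (f : Polynomial ℤ) (hf : f.Monic)
    (φ : Fin t → Polynomial ℤ) (ℓ : Fin t → ℕ)
    (hmon : ∀ i, (φ i).Monic)
    (hirr : ∀ i, Irreducible ((φ i).map (Int.castRingHom (ZMod p))))
    (hdist : ∀ i j, i ≠ j →
      (φ i).map (Int.castRingHom (ZMod p)) ≠ (φ j).map (Int.castRingHom (ZMod p)))
    (hℓ : ∀ i, 1 ≤ ℓ i)
    (hfac : f.map (Int.castRingHom (ZMod p)) =
      ∏ i, ((φ i).map (Int.castRingHom (ZMod p))) ^ (ℓ i)) :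
    LinearIndependent (ZMod p)
      (fun x : Σ i : Fin t, Fin (ℓ i) × Fin ((φ i).natDegree) =>
        ((f /ₘ (φ x.1) ^ ((x.2.1 : ℕ) + 1)) * X ^ (x.2.2 : ℕ)).map
          (Int.castRingHom (ZMod p))) := by
  haveI : Fact p.Prime := ⟨hp⟩
  set K := ZMod p
  set φ' : Fin t → K[X] := fun i => (φ i).map (Int.castRingHom (ZMod p)) with hφ'
  have hmon' : ∀ i, (φ' i).Monic := fun i => (hmon i).map _
  have hdeg' : ∀ i, (φ' i).natDegree = (φ i).natDegree := fun i =>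
    (hmon i).natDegree_map _
  have hprime : ∀ i, Prime (φ' i) := fun i => (hirr i).prime
  have hdpos : ∀ i, 0 < (φ i).natDegree := by
    intro i
    rw [← hdeg' i]
    exact (hirr i).natDegree_pos
  -- key non-divisibility between distinct irreducibles
  have hndvd : ∀ i j, i ≠ j → ¬ (φ' i ∣ φ' j) := by
    intro i j hij hdvd
    exact hdist i j hij
      (eq_of_monic_of_associated (hmon' i) (hmon' j)
        ((hirr i).associated_of_dvd (hirr j) hdvd))
  set fb := f.map (Int.castRingHom (ZMod p)) with hfb
  set R : Fin t → K[X] := fun i => ∏ I ∈ Finset.univ.erase i, φ' I ^ ℓ I with hR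
  have hfRi : ∀ i, fb = φ' i ^ ℓ i * R i := by
    intro i
    rw [hfac, hR]
    exact (Finset.mul_prod_erase Finset.univ _ (Finset.mem_univ i)).symm
  have hRnd : ∀ i, ¬ (φ' i ∣ R i) := by
    intro i hdvd
    obtain ⟨J, hJ, hJd⟩ := (hprime i).exists_mem_finset_dvd hdvd
    exact hndvd i J (Finset.ne_of_mem_erase hJ).symm ((hprime i).dvd_of_dvd_pow hJd)
  rw [Fintype.linearIndependent_iff]
  intro g hg
  -- the digit polynomials
  set P : (i : Fin t) → ℕ → K[X] := fun i m =>
    ∑ k : Fin (φ i).natDegree,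
      (if h : m < ℓ i then C (g ⟨i, (⟨m, h⟩, k)⟩) else 0) * X ^ (k : ℕ) with hP
  have hPdeg : ∀ i m, (P i m).degree < (φ' i).degree := by
    intro i m
    have hd : (φ' i).degree = ((φ i).natDegree : WithBot ℕ) := by
      rw [degree_eq_natDegree (hmon' i).ne_zero, hdeg' i]
    rw [hd]
    refine lt_of_le_of_lt (degree_sum_le _ _) ?_
    rw [Finset.sup_lt_iff (by exact_mod_cast WithBot.bot_lt_coe _)]
    intro k _
    refine lt_of_le_of_lt (degree_mul_le _ _) ?_
    have h1 : (if h : m < ℓ i then C (g ⟨i, (⟨m, h⟩, k)⟩) else 0).degree ≤ 0 := by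
      split
      · exact degree_C_le
      · simp
    refine lt_of_le_of_lt (add_le_add h1 (degree_X_pow_le _)) ?_
    simp only [zero_add]
    exact_mod_cast WithBot.coe_lt_coe.2 k.2
  set S : Fin t → K[X] := fun i =>
    ∑ m ∈ Finset.range (ℓ i), φ' i ^ (ℓ i - (m + 1)) * P i m with hS
  -- rewrite the linear relation
  have hrel : ∑ i, R i * S i = 0 := by
    rw [← hg, ← Finset.univ_sigma_univ, Finset.sum_sigma]
    refine Finset.sum_congr rfl fun i _ => ?_
    rw [hS, Finset.mul_sum,
      ← Fin.sum_univ_eq_sum_range (fun m => R i * (φ' i ^ (ℓ i - (m + 1)) * P i m)) (ℓ i),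
      ← Finset.univ_product_univ, Finset.sum_product]
    refine Finset.sum_congr rfl fun j _ => ?_
    have hPj : P i (j : ℕ) = ∑ k : Fin (φ i).natDegree, C (g ⟨i, (j, k)⟩) * X ^ (k : ℕ) := by
      rw [hP]
      refine Finset.sum_congr rfl fun k _ => ?_
      rw [dif_pos j.2]
    rw [hPj, Finset.mul_sum, Finset.mul_sum]
    refine Finset.sum_congr rfl fun k _ => ?_
    -- compute the image of the quotient
    have hq : (f /ₘ (φ i) ^ ((j : ℕ) + 1)).map (Int.castRingHom (ZMod p))
        = φ' i ^ (ℓ i - ((j : ℕ) + 1)) * R i := by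
      rw [map_divByMonic _ ((hmon i).pow _)]
      have : fb = (φ' i) ^ ((j : ℕ) + 1) * (φ' i ^ (ℓ i - ((j : ℕ) + 1)) * R i) := by
        rw [hfRi i, ← mul_assoc, ← pow_add]
        congr 2
        omega
      rw [Polynomial.map_pow, ← hfb]
      show fb /ₘ φ' i ^ ((j : ℕ) + 1) = _
      rw [this, mul_divByMonic_cancel_left _ ((hmon' i).pow _)]
    rw [Polynomial.map_mul, hq, Polynomial.map_pow, map_X, smul_eq_C_mul]
    ring
  -- conclude g = 0
  intro x
  obtain ⟨i, j, k⟩ := x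
  -- Step: φ' i ^ ℓ i divides R i * S i
  have hdvd1 : φ' i ^ ℓ i ∣ R i * S i := by
    have h0 : R i * S i + ∑ I ∈ Finset.univ.erase i, R I * S I = 0 := by
      rw [Finset.add_sum_erase Finset.univ (fun I => R I * S I) (Finset.mem_univ i)]
      exact hrel
    rw [eq_neg_of_add_eq_zero_left h0]
    refine dvd_neg.2 (Finset.dvd_sum fun I hI => ?_)
    refine Dvd.dvd.mul_right ?_ (S I)
    rw [hR]
    exact Finset.dvd_prod_of_mem (fun J => φ' J ^ ℓ J)
      (Finset.mem_erase.2 ⟨(Finset.ne_of_mem_erase hI).symm, Finset.mem_univ i⟩)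
  have hSdvd : φ' i ^ ℓ i ∣ S i :=
    (hprime i).pow_dvd_of_dvd_mul_left _ (hRnd i) hdvd1
  have hSzero : S i = 0 := by
    by_contra h
    have hle := Polynomial.degree_le_of_dvd hSdvd h
    have hlt : (S i).degree < ((φ' i) ^ ℓ i).degree := by
      rw [hS]
      refine lt_of_le_of_lt (degree_sum_le _ _) ?_
      have hdegpow : ((φ' i) ^ ℓ i).degree = ((ℓ i * (φ i).natDegree : ℕ) : WithBot ℕ) := by
        rw [degree_eq_natDegree (pow_ne_zero _ (hmon' i).ne_zero),
          (hmon' i).natDegree_pow, hdeg' i]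
      rw [hdegpow, Finset.sup_lt_iff (by exact_mod_cast WithBot.bot_lt_coe _)]
      intro m hm
      simp only [Finset.mem_range] at hm
      refine lt_of_le_of_lt (degree_mul_le _ _) ?_
      have h1 : ((φ' i) ^ (ℓ i - (m + 1))).degree
          = (((ℓ i - (m + 1)) * (φ i).natDegree : ℕ) : WithBot ℕ) := by
        rw [degree_eq_natDegree (pow_ne_zero _ (hmon' i).ne_zero),
          (hmon' i).natDegree_pow, hdeg' i]
      rw [h1]
      have h2 := hPdeg i m
      rw [degree_eq_natDegree (hmon' i).ne_zero, hdeg' i] at h2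
      calc (((ℓ i - (m + 1)) * (φ i).natDegree : ℕ) : WithBot ℕ) + (P i m).degree
          < (((ℓ i - (m + 1)) * (φ i).natDegree : ℕ) : WithBot ℕ) + ((φ i).natDegree : ℕ) := by
            exact WithBot.add_lt_add_left (by exact_mod_cast WithBot.coe_ne_bot) h2
        _ ≤ ((ℓ i * (φ i).natDegree : ℕ) : WithBot ℕ) := by
            rw [← Nat.cast_add]
            refine WithBot.coe_le_coe.2 ?_
            calc (ℓ i - (m + 1)) * (φ i).natDegree + (φ i).natDegree
                = (ℓ i - (m + 1) + 1) * (φ i).natDegree := by ring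
              _ ≤ ℓ i * (φ i).natDegree := Nat.mul_le_mul_right _ (by omega)
    exact absurd hle (not_le.2 hlt)
  have hPzero := digit_lemma (hmon' i) (ℓ i) (P i) (hPdeg i) hSzero j j.2
  -- extract coefficient k
  have := congrArg (fun q => q.coeff (k : ℕ)) hPzero
  simp only [hP, dif_pos j.2, finset_sum_coeff, coeff_C_mul, coeff_X_pow,
    mul_ite, mul_one, mul_zero, coeff_zero] at this
  rw [Finset.sum_eq_single k] at this
  · simpa using this
  · intro b _ hb
    exact if_neg fun h => hb (Fin.ext h).symm
  · intro h
    exact absurd (Finset.mem_univ k) h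
end

section
/- Let f(x) ∈ ℤ[x] be monic irreducible of degree n, θ a root, K = ℚ(θ). With notation as above, the elements α_{i,j,k} := q_{i,j}(θ)·θ^k (1 ≤ i ≤ t, 1 ≤ j ≤ ℓ_i, 0 ≤ k < deg φ_i) form a basis of ℤ_(p)[θ] as a ℤ_(p)-module. -/
/-!
Put `g i j k = f /ₘ φ i ^ (j + 1) * X ^ k ∈ ℤ[X]` (with `j` counted from `0`), so that
`α i j k = g i j k (θ)`; these are `n = deg f` polynomials of degree `< n`. Modulo `p`,
`f /ₘ φ i ^ (j + 1) ≡ φ i ^ (ℓ i - j - 1) * ∏ m ≠ i, φ m ^ ℓ m`, so the uniqueness of partial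
fraction expansions in `𝔽_p[X]` makes the reductions of the `g i j k` linearly independent.
Hence the `n × n` integer matrix `A` of their coefficients has `det A` prime to `p`, and the adjugate
writes `det A • h` as an integral combination of the `g i j k` for every `h` of degree `< n`.
Finally, evaluation at `θ` is injective on polynomials of degree `< n` (the minimal polynomial of `θ`
is `f`) and maps them onto `ℤ[θ]`.
-/

open Polynomial Finset

namespace Polynomial

theorem prod_pow_divByMonic_pow {R ι : Type*} [CommRing R] [Fintype ι] [DecidableEq ι]
    (φ : ι → R[X]) (ℓ : ι → ℕ) {i : ι} (hφ : (φ i).Monic) {j : ℕ} (hj : j ≤ ℓ i) :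
    (∏ m, φ m ^ ℓ m) /ₘ φ i ^ j = φ i ^ (ℓ i - j) * ∏ m ∈ univ.erase i, φ m ^ ℓ m := by
  rw [← mul_prod_erase univ _ (mem_univ i), ← Nat.add_sub_cancel' hj, pow_add, mul_assoc,
    Nat.add_sub_cancel_left, mul_divByMonic_cancel_left _ (hφ.pow j)]

theorem isCoprime_of_monic_of_irreducible_of_ne {K : Type*} [Field K] {P Q : K[X]} (hP : P.Monic)
    (hQ : Q.Monic) (hPirr : Irreducible P) (hQirr : Irreducible Q) (hPQ : P ≠ Q) :
    IsCoprime P Q :=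
  hPirr.coprime_iff_not_dvd.2 fun hdvd =>
    hPQ (eq_of_monic_of_associated hP hQ (hPirr.associated_of_dvd hQirr hdvd))

theorem linearIndependent_prod_pow_divByMonic_mul_X_pow {K ι : Type*} [Field K] [Fintype ι]
    (φ : ι → K[X]) (ℓ D : ι → ℕ) (hmon : ∀ i, (φ i).Monic) (hirr : ∀ i, Irreducible (φ i))
    (hinj : Function.Injective φ) (hD : ∀ i, D i ≤ (φ i).natDegree) :
    LinearIndependent K fun x : Σ i, Fin (ℓ i) × Fin (D i) =>
      (∏ m, φ m ^ ℓ m) /ₘ φ x.1 ^ ((x.2.1 : ℕ) + 1) * X ^ (x.2.2 : ℕ) := by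
  classical
  rw [Fintype.linearIndependent_iff]
  intro c hc
  -- `r i j` is the numerator of `φ i ^ j` in the partial fraction expansion, hence the `Fin.rev`.
  set r : ∀ i, Fin (ℓ i) → K[X] :=
    fun i j => ∑ k : Fin (D i), C (c ⟨i, (Fin.rev j, k)⟩) * X ^ (k : ℕ) with hr
  have hrdeg : ∀ i ∈ (univ : Finset ι), ∀ j, (r i j).degree < (φ i).degree := fun i _ j =>
    (degree_sum_fin_lt _).trans_le <| by
      rw [degree_eq_natDegree (hmon i).ne_zero]
      exact_mod_cast hD i
  have hsum :
      ∑ i, ∑ j : Fin (ℓ i), r i j * φ i ^ (j : ℕ) * ∏ k ∈ univ.erase i, φ k ^ ℓ k = 0 := by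
    rw [← hc, Fintype.sum_sigma]
    refine sum_congr rfl fun i _ => ?_
    rw [Fintype.sum_prod_type]
    refine Fintype.sum_equiv Fin.revPerm _ _ fun j => ?_
    rw [hr, sum_mul, sum_mul]
    refine sum_congr rfl fun k _ => ?_
    have hj : ℓ i - (ℓ i - (j + 1) + 1) = j := by omega
    rw [Fin.revPerm_apply, prod_pow_divByMonic_pow φ ℓ (hmon i) j.rev.2, Fin.val_rev, hj,
      smul_eq_C_mul]
    ring
  obtain ⟨-, hr0⟩ := quo_mul_prod_pow_add_sum_rem_mul_prod_pow_unique (q₁ := 0) (q₂ := 0)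
    (r₂ := fun _ _ => 0) (fun i _ => hmon i)
    (fun i _ j _ hij => isCoprime_of_monic_of_irreducible_of_ne (hmon i) (hmon j) (hirr i) (hirr j)
      (hinj.ne hij)) hrdeg (fun i _ _ => bot_lt_iff_ne_bot.2 (by simpa using (hmon i).ne_zero))
    (by simp [hsum])
  rintro ⟨i, j, k⟩
  have := congr_arg (coeff · k) (congr_fun (hr0 i (mem_univ i)) (Fin.rev j))
  simpa [hr, finsetSum_coeff, coeff_C_mul_X_pow, Fin.val_inj] using this

theorem linearIndependent_map_divByMonic_pow_mul_X_pow {R K ι : Type*} [CommRing R] [Field K]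
    [Fintype ι] (ψ : R →+* K) {f : R[X]} (φ : ι → R[X]) (ℓ : ι → ℕ) (hmon : ∀ i, (φ i).Monic)
    (hirr : ∀ i, Irreducible ((φ i).map ψ)) (hinj : Function.Injective fun i => (φ i).map ψ)
    (hfac : f.map ψ = ∏ i, (φ i).map ψ ^ ℓ i) :
    LinearIndependent K fun x : Σ i, Fin (ℓ i) × Fin (φ i).natDegree =>
      (f /ₘ φ x.1 ^ ((x.2.1 : ℕ) + 1) * X ^ (x.2.2 : ℕ)).map ψ := by
  convert linearIndependent_prod_pow_divByMonic_mul_X_pow (fun i => (φ i).map ψ) ℓ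
    (fun i => (φ i).natDegree) (fun i => (hmon i).map ψ) hirr hinj
    (fun i => ((hmon i).natDegree_map ψ).ge) using 2 with x
  rw [Polynomial.map_mul, Polynomial.map_pow, map_X, map_divByMonic ψ ((hmon _).pow _), hfac,
    Polynomial.map_pow]

theorem sum_mul_natDegree_eq_natDegree_of_map_eq_prod {R K ι : Type*} [CommRing R] [Field K]
    [Fintype ι] (ψ : R →+* K) {f : R[X]} (hf : f.Monic) (φ : ι → R[X]) (ℓ : ι → ℕ)
    (hmon : ∀ i, (φ i).Monic) (hfac : f.map ψ = ∏ i, (φ i).map ψ ^ ℓ i) :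
    ∑ i, ℓ i * (φ i).natDegree = f.natDegree := by
  rw [← hf.natDegree_map ψ, hfac, natDegree_prod_of_monic _ _ fun i _ => ((hmon i).map ψ).pow _]
  simp [(hmon _).natDegree_map]

section CoeffVectors

variable {R ι : Type*} [CommRing R] {n : ℕ}

theorem eq_zero_of_mem_degreeLT_of_coeff_eq_zero {P : R[X]} (hP : P ∈ degreeLT R n)
    (e : ι ≃ Fin n) (h : ∀ y, P.coeff (e y) = 0) : P = 0 := by
  ext m
  by_cases hm : m < n
  · simpa using h (e.symm ⟨m, hm⟩)
  · exact coeff_eq_zero_of_degree_lt <|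
      (mem_degreeLT.1 hP).trans_le (by exact_mod_cast not_lt.1 hm)

theorem sum_smul_coeff_comp [Fintype ι] (e : ι ≃ Fin n) (g : ι → R[X]) (c : ι → R) :
    ∑ x, c x • (fun y => (g x).coeff (e y)) = fun y => (∑ x, c x • g x).coeff (e y) := by
  ext y
  simp [finsetSum_coeff]

theorem linearIndependent_iff_coeff_comp [Fintype ι] (e : ι ≃ Fin n) {g : ι → R[X]}
    (hg : ∀ x, g x ∈ degreeLT R n) :
    LinearIndependent R g ↔ LinearIndependent R fun x y => (g x).coeff (e y) := by
  simp only [Fintype.linearIndependent_iff, sum_smul_coeff_comp]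
  refine forall_congr' fun c => imp_congr_left ⟨fun h => by rw [h]; rfl, fun h => ?_⟩
  exact eq_zero_of_mem_degreeLT_of_coeff_eq_zero
    (Submodule.sum_mem _ fun x _ => Submodule.smul_mem _ _ (hg x)) e (congr_fun h)

end CoeffVectors

theorem exists_smul_mem_span_of_linearIndependent_map {R K ι : Type*} [CommRing R] [IsDomain R]
    [Field K] [Fintype ι] (ψ : R →+* K) {n : ℕ} (hn : Fintype.card ι = n) {g : ι → R[X]}
    (hg : ∀ x, g x ∈ degreeLT R n) (hind : LinearIndependent K fun x => (g x).map ψ) :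
    ∃ d : R, ψ d ≠ 0 ∧ LinearIndependent R g ∧
      ∀ h ∈ degreeLT R n, d • h ∈ Submodule.span R (Set.range g) := by
  classical
  let e := Fintype.equivFinOfCardEq hn
  let A : Matrix ι ι R := Matrix.of fun x y => (g x).coeff (e y)
  have hA : IsUnit (A.map ψ) := by
    have hrows : (A.map ψ).row = fun x y => ((g x).map ψ).coeff (e y) := by
      ext x y
      simp [A, coeff_map]
    rw [← Matrix.linearIndependent_rows_iff_isUnit, hrows]
    exact (linearIndependent_iff_coeff_comp e fun x => mem_degreeLT.2 <|
      degree_map_le.trans_lt (mem_degreeLT.1 (hg x))).1 hind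
  have hdet : ψ A.det ≠ 0 := by
    rw [RingHom.map_det]
    exact (Matrix.isUnit_iff_isUnit_det _).1 hA |>.ne_zero
  have hdet0 : A.det ≠ 0 := fun h => hdet (by rw [h, map_zero])
  refine ⟨A.det, hdet, (linearIndependent_iff_coeff_comp e hg).2 <|
    Matrix.linearIndependent_rows_of_det_ne_zero hdet0, ?_⟩
  intro h hh
  rw [Submodule.mem_span_range_iff_exists_fun]
  set c := Matrix.vecMul (fun y => h.coeff (e y)) A.adjugate
  have hc : Matrix.vecMul c A = A.det • fun y => h.coeff (e y) := by
    rw [Matrix.vecMul_vecMul, Matrix.adjugate_mul, Matrix.vecMul_smul, Matrix.vecMul_one]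
  refine ⟨c, sub_eq_zero.1 <| eq_zero_of_mem_degreeLT_of_coeff_eq_zero
    (Submodule.sub_mem _ (Submodule.sum_mem _ fun x _ => Submodule.smul_mem _ _ (hg x))
      (Submodule.smul_mem _ _ hh)) e fun y => ?_⟩
  have := congr_fun hc y
  simpa [Matrix.vecMul_eq_sum, A, finsetSum_coeff, sub_eq_zero] using this

theorem divByMonic_mul_X_pow_mem_degreeLT {R : Type*} [CommRing R] [Nontrivial R] (f : R[X])
    {q : R[X]} (hq : q.Monic) {k : ℕ} (hk : k < q.natDegree) :
    f /ₘ q * X ^ k ∈ degreeLT R f.natDegree := by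
  rw [mem_degreeLT]
  by_cases hqf : q.natDegree ≤ f.natDegree
  · have hlt : (f /ₘ q * X ^ k).natDegree < f.natDegree := natDegree_mul_le.trans_lt <| by
      rw [natDegree_divByMonic f hq, natDegree_X_pow]
      omega
    exact degree_le_natDegree.trans_lt (by exact_mod_cast hlt)
  · rw [(divByMonic_eq_zero_iff hq).2 (degree_lt_degree (not_le.1 hqf)), zero_mul, degree_zero]
    exact WithBot.bot_lt_coe _

theorem exists_mem_degreeLT_aeval_eq_of_mem_adjoin {R S : Type*} [CommRing R] [Nontrivial R]
    [CommRing S] [Algebra R S] {f : R[X]} (hf : f.Monic) {s : S} (hfs : aeval s f = 0) {z : S}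
    (hz : z ∈ Algebra.adjoin R {s}) : ∃ h ∈ degreeLT R f.natDegree, aeval s h = z := by
  rw [Algebra.adjoin_singleton_eq_range_aeval] at hz
  obtain ⟨h, rfl⟩ := hz
  exact ⟨h %ₘ f, mem_degreeLT.2 ((degree_modByMonic_lt h hf).trans_eq
    (degree_eq_natDegree hf.ne_zero)), aeval_modByMonic_eq_self_of_root hfs⟩

theorem eq_zero_of_aeval_eq_zero_of_degree_lt {R S : Type*} [CommRing R] [IsDomain R]
    [IsIntegrallyClosed R] [CommRing S] [IsDomain S] [Algebra R S] [Module.IsTorsionFree R S]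
    {f G : R[X]} (hf : f.Monic) (hirr : Irreducible f) {s : S} (hfs : aeval s f = 0)
    (hGs : aeval s G = 0) (hG : G.degree < f.degree) : G = 0 := by
  by_contra hG0
  have hs : IsIntegral R s := ⟨f, hf, hfs⟩
  have hfG : f ∣ G := ((minpoly.irreducible hs).dvd_symm hirr
    (minpoly.isIntegrallyClosed_dvd hs hfs)).trans (minpoly.isIntegrallyClosed_dvd hs hGs)
  exact hf.not_dvd_of_degree_lt hG0 hG hfG

end Polynomial

theorem stmt14_general (p : ℕ) (hp : p.Prime) (t : ℕ) (f : Polynomial ℤ)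
    (hf : f.Monic) (hirr : Irreducible f)
    (θ : ℂ) (hθ : Polynomial.aeval θ f = 0)
    (φ : Fin t → Polynomial ℤ) (ℓ : Fin t → ℕ)
    (hmon : ∀ i, (φ i).Monic)
    (hirrφ : ∀ i, Irreducible ((φ i).map (Int.castRingHom (ZMod p))))
    (hdist : ∀ i j, i ≠ j →
      (φ i).map (Int.castRingHom (ZMod p)) ≠ (φ j).map (Int.castRingHom (ZMod p)))
    (hfac : f.map (Int.castRingHom (ZMod p)) =
      ∏ i, ((φ i).map (Int.castRingHom (ZMod p))) ^ (ℓ i))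
    (α : (Σ i : Fin t, Fin (ℓ i) × Fin ((φ i).natDegree)) → ℂ)
    (hα : ∀ x, α x = Polynomial.aeval θ ((f /ₘ (φ x.1) ^ ((x.2.1 : ℕ) + 1)) * X ^ (x.2.2 : ℕ))) :
    LinearIndependent ℤ α ∧
    ∀ z ∈ Algebra.adjoin ℤ ({θ} : Set ℂ),
      ∃ (d : ℤ) (c : (Σ i : Fin t, Fin (ℓ i) × Fin ((φ i).natDegree)) → ℤ),
        ¬ (p : ℤ) ∣ d ∧ (d : ℂ) * z = ∑ x, (c x : ℂ) * α x := by
  have : Fact p.Prime := ⟨hp⟩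
  set g := fun x : Σ i : Fin t, Fin (ℓ i) × Fin ((φ i).natDegree) =>
    f /ₘ φ x.1 ^ ((x.2.1 : ℕ) + 1) * X ^ (x.2.2 : ℕ)
  have hcard : Fintype.card (Σ i : Fin t, Fin (ℓ i) × Fin ((φ i).natDegree)) = f.natDegree := by
    simpa [Fintype.card_sigma] using
      sum_mul_natDegree_eq_natDegree_of_map_eq_prod _ hf φ ℓ hmon hfac
  have hgdeg : ∀ x, g x ∈ degreeLT ℤ f.natDegree := fun x =>
    divByMonic_mul_X_pow_mem_degreeLT f ((hmon x.1).pow _) <| x.2.2.2.trans_le <| by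
      rw [(hmon x.1).natDegree_pow]
      exact Nat.le_mul_of_pos_left _ (Nat.succ_pos _)
  have hind := linearIndependent_map_divByMonic_pow_mul_X_pow _ φ ℓ hmon hirrφ
    (fun i j hij => by_contra fun hne => hdist i j hne hij) hfac
  obtain ⟨d, hd, hgind, hspan⟩ := exists_smul_mem_span_of_linearIndependent_map _ hcard hgdeg hind
  refine ⟨?_, fun z hz => ?_⟩
  · rw [Fintype.linearIndependent_iff] at hgind ⊢
    intro c hc
    refine hgind c (eq_zero_of_aeval_eq_zero_of_degree_lt hf hirr hθ ?_ ?_)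
    · simpa [hα, g, zsmul_eq_mul] using hc
    · rw [degree_eq_natDegree hf.ne_zero, ← mem_degreeLT]
      exact sum_mem fun x _ => Submodule.smul_mem _ _ (hgdeg x)
  · obtain ⟨h, hh, rfl⟩ := exists_mem_degreeLT_aeval_eq_of_mem_adjoin hf hθ hz
    obtain ⟨c, hc⟩ := (Submodule.mem_span_range_iff_exists_fun ℤ).1 (hspan h hh)
    refine ⟨d, c, fun hpd => hd ((ZMod.intCast_zmod_eq_zero_iff_dvd d p).2 hpd), ?_⟩
    simpa [hα, g, zsmul_eq_mul] using (congr_arg (aeval θ) hc).symm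

/-- the elements α_{i,j,k} = q_{i,j}(θ)·θ^k form a ℤ_(p)-basis of
ℤ_(p)[θ].  Since all α_{i,j,k} lie in ℤ[θ], this is equivalently expressed by:
they are linearly independent, and every element of ℤ[θ] becomes a ℤ-linear
combination of them after multiplication by some integer d prime to p
(i.e. they span ℤ_(p)[θ] over ℤ_(p)). -/
theorem stmt14 (p : ℕ) (hp : p.Prime) (n t : ℕ) (f : Polynomial ℤ)
    (hf : f.Monic) (hdeg : f.natDegree = n) (hirr : Irreducible f)
    (θ : ℂ) (hθ : Polynomial.aeval θ f = 0)
    (φ : Fin t → Polynomial ℤ) (ℓ : Fin t → ℕ)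
    (hmon : ∀ i, (φ i).Monic)
    (hirrφ : ∀ i, Irreducible ((φ i).map (Int.castRingHom (ZMod p))))
    (hdist : ∀ i j, i ≠ j →
      (φ i).map (Int.castRingHom (ZMod p)) ≠ (φ j).map (Int.castRingHom (ZMod p)))
    (hℓ : ∀ i, 1 ≤ ℓ i)
    (hfac : f.map (Int.castRingHom (ZMod p)) =
      ∏ i, ((φ i).map (Int.castRingHom (ZMod p))) ^ (ℓ i))
    (α : (Σ i : Fin t, Fin (ℓ i) × Fin ((φ i).natDegree)) → ℂ)
    (hα : ∀ x, α x = Polynomial.aeval θ ((f /ₘ (φ x.1) ^ ((x.2.1 : ℕ) + 1)) * X ^ (x.2.2 : ℕ))) :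
    LinearIndependent ℤ α ∧
    ∀ z ∈ Algebra.adjoin ℤ ({θ} : Set ℂ),
      ∃ (d : ℤ) (c : (Σ i : Fin t, Fin (ℓ i) × Fin ((φ i).natDegree)) → ℤ),
        ¬ (p : ℤ) ∣ d ∧ (d : ℂ) * z = ∑ x, (c x : ℂ) * α x :=
  stmt14_general p hp t f hf hirr θ hθ φ ℓ hmon hirrφ hdist hfac α hα
end

section
/- Let p > 2 be a prime, f(x) = x⁴ + a x² + b x + c ∈ ℤ[x] with p ∤ a, p ∣ b, p ∤ c, and a² ≡ 4c (mod p), and suppose −a/2 is a quadratic residue mod p. Write b = B p^m and a² − 4c = A p^{m'} with p ∤ AB, and set r = min{m, m'}. If m ≠ m' then for any integer s with s² ≡ −a/2 (mod p^{r+1}) one has v_p(f(s)) = r and v_p(f(−s)) = r. -/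
/-!
With `X = 2s² + a` and `D = a² − 4c` one has `4 f(s) = X² + 4bs − D`. Since `p ∤ a`, the
hypothesis `p^(r+1) ∣ X` forces `p ∤ s`, so `v_p(4bs) = v_p(b) = m` while `v_p(D) = m'`.
As `m ≠ m'`, the ultrametric inequality is an equality: `v_p(4bs − D) = r`, and `X²`, being
divisible by `p^(r+1)`, does not change this valuation. Finally `p ∤ 4`; replacing `b` by `−b`
gives `f(−s)`.
-/

section emultiplicity

variable {R : Type*} [CommRing R] {p : R}

lemma not_dvd_of_pow_succ_dvd_two_mul_sq_add {a s : R} {r : ℕ}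
    (ha : ¬ p ∣ a) (hs : p ^ (r + 1) ∣ 2 * s ^ 2 + a) : ¬ p ∣ s := by
  intro hps
  have hX : p ∣ 2 * s ^ 2 + a := (dvd_pow_self p r.succ_ne_zero).trans hs
  exact ha ((dvd_add_right ((hps.pow two_ne_zero).mul_left 2)).mp hX)

variable [IsDomain R]

lemma emultiplicity_mul_pow_self_of_not_dvd (hp : Prime p) {u : R} (hu : ¬ p ∣ u) (n : ℕ) :
    emultiplicity p (u * p ^ n) = n := by
  rw [emultiplicity_mul hp, emultiplicity_eq_zero.mpr hu, emultiplicity_pow_self_of_prime hp,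
    zero_add]

lemma emultiplicity_mul_of_not_dvd_left (hp : Prime p) {u : R} (hu : ¬ p ∣ u) (x : R) :
    emultiplicity p (u * x) = emultiplicity p x := by
  rw [emultiplicity_mul hp, emultiplicity_eq_zero.mpr hu, zero_add]

theorem emultiplicity_quartic_eq_min (hp : Prime p) (h2 : ¬ p ∣ 2) {a b c s : R} {r : ℕ}
    (ha : ¬ p ∣ a) (hbD : emultiplicity p b ≠ emultiplicity p (a ^ 2 - 4 * c))
    (hr : min (emultiplicity p b) (emultiplicity p (a ^ 2 - 4 * c)) = r)
    (hs : p ^ (r + 1) ∣ 2 * s ^ 2 + a) :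
    emultiplicity p (s ^ 4 + a * s ^ 2 + b * s + c) = r := by
  have h4 : ¬ p ∣ 4 := fun h ↦ h2 ((hp.dvd_or_dvd (by norm_num [h] : p ∣ 2 * 2)).elim id id)
  have hps := not_dvd_of_pow_succ_dvd_two_mul_sq_add ha hs
  have hbs : emultiplicity p (4 * b * s) = emultiplicity p b := by
    rw [mul_comm, ← mul_assoc, emultiplicity_mul_of_not_dvd_left hp (hp.not_dvd_mul hps h4)]
  have hlin : emultiplicity p (4 * b * s + -(a ^ 2 - 4 * c)) = r := by
    rw [emultiplicity_add_eq_min] <;> rw [emultiplicity_neg, hbs]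
    exacts [hr, hbD]
  have hsq : (r : ℕ∞) < emultiplicity p ((2 * s ^ 2 + a) ^ 2) :=
    (ENat.add_one_le_iff (ENat.natCast_ne_top r)).mp <| by
      exact_mod_cast le_emultiplicity_of_pow_dvd (dvd_pow hs two_ne_zero)
  calc emultiplicity p (s ^ 4 + a * s ^ 2 + b * s + c)
      = emultiplicity p (4 * (s ^ 4 + a * s ^ 2 + b * s + c)) :=
        (emultiplicity_mul_of_not_dvd_left hp h4 _).symm
    _ = emultiplicity p ((2 * s ^ 2 + a) ^ 2 + (4 * b * s + -(a ^ 2 - 4 * c))) := by ring_nf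
    _ = r := by rw [emultiplicity_add_of_gt (hlin ▸ hsq), hlin]

end emultiplicity

lemma Int.not_natCast_dvd_two {p : ℕ} (hp2 : 2 < p) : ¬ (p : ℤ) ∣ 2 := fun h ↦ by
  have := Int.le_of_dvd two_pos h
  omega

theorem stmt16_general (p : ℕ) (hp : p.Prime) (hp2 : 2 < p) (a b c A B : ℤ) (m m' : ℕ)
    (ha : ¬ (p : ℤ) ∣ a)
    (hB : b = B * (p : ℤ) ^ m) (hpB : ¬ (p : ℤ) ∣ B)
    (hA : a ^ 2 - 4 * c = A * (p : ℤ) ^ m') (hpA : ¬ (p : ℤ) ∣ A)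
    (r : ℕ) (hr : r = min m m') (hmm : m ≠ m')
    (s : ℤ) (hs : (p : ℤ) ^ (r + 1) ∣ 2 * s ^ 2 + a) :
    ((p : ℤ) ^ r ∣ (s ^ 4 + a * s ^ 2 + b * s + c) ∧
      ¬ (p : ℤ) ^ (r + 1) ∣ (s ^ 4 + a * s ^ 2 + b * s + c)) ∧
    ((p : ℤ) ^ r ∣ (s ^ 4 + a * s ^ 2 - b * s + c) ∧
      ¬ (p : ℤ) ^ (r + 1) ∣ (s ^ 4 + a * s ^ 2 - b * s + c)) := by
  have hpZ : Prime (p : ℤ) := Nat.prime_iff_prime_int.mp hp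
  have hvb : emultiplicity (p : ℤ) b = m := hB ▸ emultiplicity_mul_pow_self_of_not_dvd hpZ hpB m
  have hvD : emultiplicity (p : ℤ) (a ^ 2 - 4 * c) = m' :=
    hA ▸ emultiplicity_mul_pow_self_of_not_dvd hpZ hpA m'
  have hbD : emultiplicity (p : ℤ) b ≠ emultiplicity (p : ℤ) (a ^ 2 - 4 * c) := by
    rw [hvb, hvD]; exact_mod_cast hmm
  have hmin : min (emultiplicity (p : ℤ) b) (emultiplicity (p : ℤ) (a ^ 2 - 4 * c)) = r := by
    rw [hvb, hvD, hr]; norm_cast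
  have key {b' : ℤ} (hb' : emultiplicity (p : ℤ) b' = emultiplicity (p : ℤ) b) :=
    emultiplicity_eq_coe.mp <| emultiplicity_quartic_eq_min hpZ (Int.not_natCast_dvd_two hp2) ha
      (hb' ▸ hbD) (hb' ▸ hmin) hs
  have hneg : s ^ 4 + a * s ^ 2 - b * s + c = s ^ 4 + a * s ^ 2 + -b * s + c := by ring
  rw [hneg]
  exact ⟨key rfl, key (emultiplicity_neg _ b)⟩

/-- in case (C1) write b = B·p^m, a² − 4c = A·p^{m'} with p ∤ AB and
r = min{m, m'}.  If m ≠ m', then for any integer s with 2s² ≡ −a (mod p^{r+1})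
one has v_p(f(s)) = r and v_p(f(−s)) = r. -/
theorem stmt16 (p : ℕ) (hp : p.Prime) (hp2 : 2 < p) (a b c A B : ℤ) (m m' : ℕ)
    (ha : ¬ (p : ℤ) ∣ a) (hb : (p : ℤ) ∣ b) (hc : ¬ (p : ℤ) ∣ c)
    (hsq : (a : ZMod p) ^ 2 = 4 * (c : ZMod p))
    (hres : ∃ u : ZMod p, 2 * u ^ 2 = -(a : ZMod p))
    (hB : b = B * (p : ℤ) ^ m) (hpB : ¬ (p : ℤ) ∣ B)
    (hA : a ^ 2 - 4 * c = A * (p : ℤ) ^ m') (hpA : ¬ (p : ℤ) ∣ A)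
    (r : ℕ) (hr : r = min m m') (hmm : m ≠ m')
    (s : ℤ) (hs : (p : ℤ) ^ (r + 1) ∣ 2 * s ^ 2 + a) :
    ((p : ℤ) ^ r ∣ (s ^ 4 + a * s ^ 2 + b * s + c) ∧
      ¬ (p : ℤ) ^ (r + 1) ∣ (s ^ 4 + a * s ^ 2 + b * s + c)) ∧
    ((p : ℤ) ^ r ∣ (s ^ 4 + a * s ^ 2 - b * s + c) ∧
      ¬ (p : ℤ) ^ (r + 1) ∣ (s ^ 4 + a * s ^ 2 - b * s + c)) :=
  stmt16_general p hp hp2 a b c A B m m' ha hB hpB hA hpA r hr hmm s hs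
end
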